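/- arXiv:2109.06680 — 2 statements merged into one kernel-verified Lean document; each statement's English description precedes it below -/
import Mathlib

section
/- Let Ω be a connected weighted simplicial complex on [n] and let p ∈ 𝒫 = ℝ[x^[0],…,x^[n]]. Then p admits an Ω-decomposition, i.e. rank_Ω(p) < ∞. Moreover, given any decomposition p = Σ_{j=1}^r p_j^[0](x^[0])⋯p_j^[n](x^[n]) with p_j^[i] ∈ ℝ[x^[i]], there exists an Ω-decomposition of p whose local polynomial at each site i and each index function is either one of the p_j^[i] or the zero polynomial. -/
namespace PolyDec

open MvPolynomial

attribute [local instance] Classical.propDecidable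

noncomputable section

/-! ### Weighted simplicial complexes -/

/-- `Ω` is a weighted simplicial complex on `[n] = {0,…,n}`. -/
def IsWSC {n : ℕ} (Ω : Finset (Fin (n + 1)) → ℕ) : Prop :=
  (∀ S T : Finset (Fin (n + 1)), S ⊆ T → Ω S ∣ Ω T) ∧ ∀ i : Fin (n + 1), Ω {i} ≠ 0

/-- `F` is a facet of `Ω`: a maximal simplex. -/
def IsFacet {n : ℕ} (Ω : Finset (Fin (n + 1)) → ℕ) (F : Finset (Fin (n + 1))) : Prop :=
  Ω F ≠ 0 ∧ ∀ S : Finset (Fin (n + 1)), Ω S ≠ 0 → F ⊆ S → S = F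

/-- `Ω` is connected: any two vertices are joined by a chain of vertices such that
consecutive ones share a facet. -/
def Conn {n : ℕ} (Ω : Finset (Fin (n + 1)) → ℕ) : Prop :=
  ∀ i j : Fin (n + 1),
    Relation.ReflTransGen
      (fun a b => ∃ F : Finset (Fin (n + 1)), IsFacet Ω F ∧ a ∈ F ∧ b ∈ F) i j

/-- The multiset of facets `ℱ̃`: each facet `F` appears with multiplicity `Ω F`. -/
abbrev MultiFacet {n : ℕ} (Ω : Finset (Fin (n + 1)) → ℕ) : Type :=
  Σ F : {F : Finset (Fin (n + 1)) // IsFacet Ω F}, Fin (Ω F.1)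

/-- The sub-multiset `ℱ̃ᵢ` of multifacets containing the vertex `i`. -/
abbrev MFi {n : ℕ} (Ω : Finset (Fin (n + 1)) → ℕ) (i : Fin (n + 1)) : Type :=
  {F : MultiFacet Ω // i ∈ F.1.1}

/-- Restriction `α|ᵢ` of `α : ℱ̃ → I` to `ℱ̃ᵢ`. -/
def restr {n : ℕ} {Ω : Finset (Fin (n + 1)) → ℕ} {I : Type} (α : MultiFacet Ω → I)
    (i : Fin (n + 1)) : MFi Ω i → I :=
  fun F => α F.1

/-! ### Group actions on a weighted simplicial complex -/

/-- An action of a group `G` on the weighted simplicial complex `Ω`: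
an action on the vertices leaving `Ω` invariant, together with a refinement to an action on
the multiset of facets which is compatible with the collapse map. -/
structure GAct {n : ℕ} (Ω : Finset (Fin (n + 1)) → ℕ) (G : Type) [Group G] where
  act : G →* Equiv.Perm (Fin (n + 1))
  omega_inv : ∀ (g : G) (S : Finset (Fin (n + 1))), Ω (S.image (act g)) = Ω S
  actF : G →* Equiv.Perm (MultiFacet Ω)
  collapse : ∀ (g : G) (F : MultiFacet Ω), (actF g F).1.1 = F.1.1.image (act g)

variable {n : ℕ} {Ω : Finset (Fin (n + 1)) → ℕ} {G : Type} [Group G]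

/-- The action is free on `ℱ̃`. -/
def GAct.Free (A : GAct Ω G) : Prop :=
  ∀ (g : G) (F : MultiFacet Ω), A.actF g F = F → g = 1

/-- The action on the vertices is blending. -/
def GAct.Blending (A : GAct Ω G) : Prop :=
  ∀ gs : Fin (n + 1) → G,
    (Function.Surjective fun i => A.act (gs i) i) →
      ∃ g : G, ∀ i, A.act g i = A.act (gs i) i

theorem GAct.mem_shift (A : GAct Ω G) (g : G) (i : Fin (n + 1)) (F : MFi Ω (A.act g i)) :
    i ∈ (A.actF g⁻¹ F.1).1.1 := by
  rw [A.collapse]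
  refine Finset.mem_image.2 ⟨A.act g i, F.2, ?_⟩
  rw [map_inv]
  exact Equiv.symm_apply_apply _ _

/-- For `β : ℱ̃ᵢ → I`, the shifted function `ᵍβ : ℱ̃_{g·i} → I`, `(ᵍβ)(F) = β (g⁻¹·F)`. -/
def GAct.shift (A : GAct Ω G) (g : G) (i : Fin (n + 1)) {I : Type} (β : MFi Ω i → I) :
    MFi Ω (A.act g i) → I :=
  fun F => β ⟨A.actF g⁻¹ F.1, A.mem_shift g i F⟩

/-! ### Polynomial spaces -/

/-- The space `𝒫 = ℝ[x⁽⁰⁾,…,x⁽ⁿ⁾]`, where block `i` has `m i` variables. -/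
abbrev PSpace {n : ℕ} (m : Fin (n + 1) → ℕ) : Type :=
  MvPolynomial (Σ i : Fin (n + 1), Fin (m i)) ℝ

/-- The local space `ℝ[x⁽ⁱ⁾]`. -/
abbrev LSpace {n : ℕ} (m : Fin (n + 1) → ℕ) (i : Fin (n + 1)) : Type :=
  MvPolynomial (Fin (m i)) ℝ

/-- The inclusion `ℝ[x⁽ⁱ⁾] → 𝒫`. -/
def emb {n : ℕ} (m : Fin (n + 1) → ℕ) (i : Fin (n + 1)) : LSpace m i →ₐ[ℝ] PSpace m :=
  rename fun j => (⟨i, j⟩ : Σ i : Fin (n + 1), Fin (m i))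

variable {m : Fin (n + 1) → ℕ}

/-- The variable permutation `x⁽ⁱ⁾ ↦ x⁽ᵍ·ⁱ⁾` induced by `g`. -/
def permVar (A : GAct Ω G) (hm : ∀ (g : G) (i : Fin (n + 1)), m (A.act g i) = m i) (g : G) :
    (Σ i : Fin (n + 1), Fin (m i)) → Σ i : Fin (n + 1), Fin (m i) :=
  fun v => ⟨A.act g v.1, Fin.cast (hm g v.1).symm v.2⟩

/-- `p` is `G`-invariant: `p(x⁽ᵍ⁰⁾,…,x⁽ᵍⁿ⁾) = p(x⁽⁰⁾,…,x⁽ⁿ⁾)` for all `g ∈ G`. -/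
def GInvPoly (A : GAct Ω G) (hm : ∀ (g : G) (i : Fin (n + 1)), m (A.act g i) = m i)
    (p : PSpace m) : Prop :=
  ∀ g : G, rename (permVar A hm g) p = p

/-! ### Sums of squares, cones -/

/-- `p` is a sum of squares. -/
def IsSos {σ : Type} (p : MvPolynomial σ ℝ) : Prop :=
  ∃ (N : ℕ) (q : Fin N → MvPolynomial σ ℝ), p = ∑ k : Fin N, q k ^ 2

/-- `C` is a convex cone. -/
def IsConvexConeSet {V : Type} [AddCommMonoid V] [Module ℝ V] (C : Set V) : Prop :=
  ∀ p ∈ C, ∀ q ∈ C, ∀ a b : ℝ, 0 ≤ a → 0 ≤ b → a • p + b • q ∈ C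

/-- The local cones agree along orbits, `C⁽ᵍ·ⁱ⁾ = C⁽ⁱ⁾` (under the renaming identification). -/
def ConeCompat (A : GAct Ω G) (hm : ∀ (g : G) (i : Fin (n + 1)), m (A.act g i) = m i)
    (C : ∀ i : Fin (n + 1), Set (LSpace m i)) : Prop :=
  ∀ (g : G) (i : Fin (n + 1)) (q : LSpace m (A.act g i)),
    q ∈ C (A.act g i) ↔ rename (Fin.cast (hm g i)) q ∈ C i

/-- The separable cone `C_sep = C⁽⁰⁾ ⊗ ⋯ ⊗ C⁽ⁿ⁾`. -/
def SepCone {n : ℕ} (m : Fin (n + 1) → ℕ) (C : ∀ i : Fin (n + 1), Set (LSpace m i)) :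
    Set (PSpace m) :=
  {p | ∃ (r : ℕ) (q : Fin r → ∀ i : Fin (n + 1), LSpace m i),
    (∀ j i, q j i ∈ C i) ∧ p = ∑ j : Fin r, ∏ i : Fin (n + 1), emb m i (q j i)}

/-! ### Decompositions and ranks -/

/-- `p` has an `Ω`-decomposition with index set of size `r`. -/
def HasODec {n : ℕ} (Ω : Finset (Fin (n + 1)) → ℕ) (m : Fin (n + 1) → ℕ) (p : PSpace m)
    (r : ℕ) : Prop :=
  ∃ q : ∀ i : Fin (n + 1), (MFi Ω i → Fin r) → LSpace m i,
    p = ∑ α : MultiFacet Ω → Fin r, ∏ i : Fin (n + 1), emb m i (q i (restr α i))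

/-- The `Ω`-rank of `p` (`⊤` if there is no decomposition). -/
def ORank {n : ℕ} (Ω : Finset (Fin (n + 1)) → ℕ) (m : Fin (n + 1) → ℕ) (p : PSpace m) : ℕ∞ :=
  ⨅ r : {r : ℕ // HasODec Ω m p r}, (r.1 : ℕ∞)

/-- `p` has an `(Ω,G)`-decomposition with index set of size `r`. -/
def HasOGDec (A : GAct Ω G) (hm : ∀ (g : G) (i : Fin (n + 1)), m (A.act g i) = m i)
    (p : PSpace m) (r : ℕ) : Prop :=
  ∃ q : ∀ i : Fin (n + 1), (MFi Ω i → Fin r) → LSpace m i,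
    (p = ∑ α : MultiFacet Ω → Fin r, ∏ i : Fin (n + 1), emb m i (q i (restr α i))) ∧
    ∀ (g : G) (i : Fin (n + 1)) (β : MFi Ω i → Fin r),
      rename (Fin.cast (hm g i)) (q (A.act g i) (A.shift g i β)) = q i β

/-- The `(Ω,G)`-rank of `p`. -/
def OGRank (A : GAct Ω G) (hm : ∀ (g : G) (i : Fin (n + 1)), m (A.act g i) = m i)
    (p : PSpace m) : ℕ∞ :=
  ⨅ r : {r : ℕ // HasOGDec A hm p r}, (r.1 : ℕ∞)

/-- `p` has a decomposition on the simplex `Σₙ` (a plain tensor decomposition) of size `r`. -/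
def HasTDec {n : ℕ} (m : Fin (n + 1) → ℕ) (p : PSpace m) (r : ℕ) : Prop :=
  ∃ q : Fin r → ∀ i : Fin (n + 1), LSpace m i,
    p = ∑ j : Fin r, ∏ i : Fin (n + 1), emb m i (q j i)

/-- The tensor rank `rank_{Σₙ}(p)`. -/
def TRank {n : ℕ} (m : Fin (n + 1) → ℕ) (p : PSpace m) : ℕ∞ :=
  ⨅ r : {r : ℕ // HasTDec m p r}, (r.1 : ℕ∞)

/-- Separable `Ω`-decomposition w.r.t. the local cones `C`. -/
def HasSepODec {n : ℕ} (Ω : Finset (Fin (n + 1)) → ℕ) (m : Fin (n + 1) → ℕ)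
    (C : ∀ i : Fin (n + 1), Set (LSpace m i)) (p : PSpace m) (r : ℕ) : Prop :=
  ∃ q : ∀ i : Fin (n + 1), (MFi Ω i → Fin r) → LSpace m i,
    (p = ∑ α : MultiFacet Ω → Fin r, ∏ i : Fin (n + 1), emb m i (q i (restr α i))) ∧
    ∀ i β, q i β ∈ C i

/-- The separable `Ω`-rank. -/
def SepORank {n : ℕ} (Ω : Finset (Fin (n + 1)) → ℕ) (m : Fin (n + 1) → ℕ)
    (C : ∀ i : Fin (n + 1), Set (LSpace m i)) (p : PSpace m) : ℕ∞ :=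
  ⨅ r : {r : ℕ // HasSepODec Ω m C p r}, (r.1 : ℕ∞)

/-- Separable `(Ω,G)`-decomposition w.r.t. the local cones `C`. -/
def HasSepOGDec (A : GAct Ω G) (hm : ∀ (g : G) (i : Fin (n + 1)), m (A.act g i) = m i)
    (C : ∀ i : Fin (n + 1), Set (LSpace m i)) (p : PSpace m) (r : ℕ) : Prop :=
  ∃ q : ∀ i : Fin (n + 1), (MFi Ω i → Fin r) → LSpace m i,
    (p = ∑ α : MultiFacet Ω → Fin r, ∏ i : Fin (n + 1), emb m i (q i (restr α i))) ∧
    (∀ (g : G) (i : Fin (n + 1)) (β : MFi Ω i → Fin r),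
      rename (Fin.cast (hm g i)) (q (A.act g i) (A.shift g i β)) = q i β) ∧
    ∀ i β, q i β ∈ C i

/-- The separable `(Ω,G)`-rank. -/
def SepOGRank (A : GAct Ω G) (hm : ∀ (g : G) (i : Fin (n + 1)), m (A.act g i) = m i)
    (C : ∀ i : Fin (n + 1), Set (LSpace m i)) (p : PSpace m) : ℕ∞ :=
  ⨅ r : {r : ℕ // HasSepOGDec A hm C p r}, (r.1 : ℕ∞)

/-- Separable decomposition on the simplex `Σₙ`. -/
def HasSepTDec {n : ℕ} (m : Fin (n + 1) → ℕ) (C : ∀ i : Fin (n + 1), Set (LSpace m i))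
    (p : PSpace m) (r : ℕ) : Prop :=
  ∃ q : Fin r → ∀ i : Fin (n + 1), LSpace m i,
    (∀ j i, q j i ∈ C i) ∧ p = ∑ j : Fin r, ∏ i : Fin (n + 1), emb m i (q j i)

/-- The separable rank on the simplex. -/
def SepTRank {n : ℕ} (m : Fin (n + 1) → ℕ) (C : ∀ i : Fin (n + 1), Set (LSpace m i))
    (p : PSpace m) : ℕ∞ :=
  ⨅ r : {r : ℕ // HasSepTDec m C p r}, (r.1 : ℕ∞)

/-- `p` has a sum-of-squares `(Ω,G)`-decomposition of size `r`: a `G`-invariant family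
`𝔮 = (q_k)` with `p = ∑ q_k²` together with an `(Ω,G)`-decomposition of the family. -/
def HasSosOGDec (A : GAct Ω G) (hm : ∀ (g : G) (i : Fin (n + 1)), m (A.act g i) = m i)
    (p : PSpace m) (r : ℕ) : Prop :=
  ∃ (s : Fin (n + 1) → ℕ) (hs : ∀ (g : G) (i : Fin (n + 1)), s (A.act g i) = s i)
    (q : ∀ i : Fin (n + 1), Fin (s i) → (MFi Ω i → Fin r) → LSpace m i),
    (p = ∑ k : ∀ i : Fin (n + 1), Fin (s i),
        (∑ α : MultiFacet Ω → Fin r, ∏ i : Fin (n + 1), emb m i (q i (k i) (restr α i))) ^ 2) ∧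
    ∀ (g : G) (i : Fin (n + 1)) (kk : Fin (s i)) (β : MFi Ω i → Fin r),
      rename (Fin.cast (hm g i))
        (q (A.act g i) (Fin.cast (hs g i).symm kk) (A.shift g i β)) = q i kk β

/-- The sos `(Ω,G)`-rank. -/
def SosOGRank (A : GAct Ω G) (hm : ∀ (g : G) (i : Fin (n + 1)), m (A.act g i) = m i)
    (p : PSpace m) : ℕ∞ :=
  ⨅ r : {r : ℕ // HasSosOGDec A hm p r}, (r.1 : ℕ∞)

/-! ### Local degree -/

/-- Every monomial of `p` has degree at most `d` in each block of variables. -/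
def locDegLE {n : ℕ} (m : Fin (n + 1) → ℕ) (p : PSpace m) (d : ℕ) : Prop :=
  ∀ s ∈ p.support, ∀ i : Fin (n + 1), (∑ j : Fin (m i), s ⟨i, j⟩) ≤ d

/-- The local degree of `p`. -/
def locDeg {n : ℕ} (m : Fin (n + 1) → ℕ) (p : PSpace m) : ℕ :=
  sInf {d : ℕ | locDegLE m p d}

/-! ### Tensor decompositions -/

/-- `(Ω,G)`-decomposition of a tensor `T ∈ ℝ^mv ⊗ ⋯ ⊗ ℝ^mv`. -/
def HasTOGDec (A : GAct Ω G) (mv : ℕ) (T : (Fin (n + 1) → Fin mv) → ℝ) (r : ℕ) : Prop :=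
  ∃ v : ∀ i : Fin (n + 1), (MFi Ω i → Fin r) → Fin mv → ℝ,
    (∀ jf : Fin (n + 1) → Fin mv,
      T jf = ∑ α : MultiFacet Ω → Fin r, ∏ i : Fin (n + 1), v i (restr α i) (jf i)) ∧
    ∀ (g : G) (i : Fin (n + 1)) (β : MFi Ω i → Fin r), v (A.act g i) (A.shift g i β) = v i β

/-- The `(Ω,G)`-rank of a tensor. -/
def TOGRank (A : GAct Ω G) (mv : ℕ) (T : (Fin (n + 1) → Fin mv) → ℝ) : ℕ∞ :=
  ⨅ r : {r : ℕ // HasTOGDec A mv T r}, (r.1 : ℕ∞)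

/-- Nonnegative `(Ω,G)`-decomposition of a tensor. -/
def HasNNTOGDec (A : GAct Ω G) (mv : ℕ) (T : (Fin (n + 1) → Fin mv) → ℝ) (r : ℕ) : Prop :=
  ∃ v : ∀ i : Fin (n + 1), (MFi Ω i → Fin r) → Fin mv → ℝ,
    (∀ jf : Fin (n + 1) → Fin mv,
      T jf = ∑ α : MultiFacet Ω → Fin r, ∏ i : Fin (n + 1), v i (restr α i) (jf i)) ∧
    (∀ (g : G) (i : Fin (n + 1)) (β : MFi Ω i → Fin r), v (A.act g i) (A.shift g i β) = v i β) ∧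
    ∀ i β j, 0 ≤ v i β j

/-- The nonnegative `(Ω,G)`-rank of a tensor. -/
def NNTOGRank (A : GAct Ω G) (mv : ℕ) (T : (Fin (n + 1) → Fin mv) → ℝ) : ℕ∞ :=
  ⨅ r : {r : ℕ // HasNNTOGDec A mv T r}, (r.1 : ℕ∞)

/-- Positive semidefinite `(Ω,G)`-decomposition of a tensor. -/
def HasPsdTOGDec (A : GAct Ω G) (mv : ℕ) (T : (Fin (n + 1) → Fin mv) → ℝ) (r : ℕ) : Prop :=
  ∃ E : ∀ i : Fin (n + 1), Fin mv → Matrix (MFi Ω i → Fin r) (MFi Ω i → Fin r) ℝ,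
    (∀ i j, (E i j).PosSemidef) ∧
    (∀ (g : G) (i : Fin (n + 1)) (j : Fin mv) (β β' : MFi Ω i → Fin r),
      E (A.act g i) j (A.shift g i β) (A.shift g i β') = E i j β β') ∧
    ∀ jf : Fin (n + 1) → Fin mv,
      T jf = ∑ α : MultiFacet Ω → Fin r, ∑ α' : MultiFacet Ω → Fin r,
        ∏ i : Fin (n + 1), E i (jf i) (restr α i) (restr α' i)

/-- The positive semidefinite `(Ω,G)`-rank of a tensor. -/
def PsdTOGRank (A : GAct Ω G) (mv : ℕ) (T : (Fin (n + 1) → Fin mv) → ℝ) : ℕ∞ :=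
  ⨅ r : {r : ℕ // HasPsdTOGDec A mv T r}, (r.1 : ℕ∞)

/-- The polynomial `p_T = ∑ T_{j₀…jₙ} (x⁽⁰⁾_{j₀})² ⋯ (x⁽ⁿ⁾_{jₙ})²` associated to a tensor. -/
def pT {n : ℕ} (mv : ℕ) (T : (Fin (n + 1) → Fin mv) → ℝ) :
    PSpace (fun _ : Fin (n + 1) => mv) :=
  ∑ jf : Fin (n + 1) → Fin mv, MvPolynomial.C (T jf) *
    ∏ i : Fin (n + 1), X (⟨i, jf i⟩ : Σ _ : Fin (n + 1), Fin mv) ^ 2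

/-! ### The Gram map -/

/-- Exponent vectors of monomials of degree at most `d` in `mv` variables. -/
abbrev Mon (mv d : ℕ) : Type := {k : Fin mv → Fin (d + 1) // (∑ j : Fin mv, (k j).val) ≤ d}

/-- The monomial at site `i` with exponent vector `k`. -/
def monAt {n : ℕ} {mv d : ℕ} (i : Fin (n + 1)) (k : Mon mv d) :
    PSpace (fun _ : Fin (n + 1) => mv) :=
  ∏ j : Fin mv, X (⟨i, j⟩ : Σ _ : Fin (n + 1), Fin mv) ^ (k.1 j).val

/-- The Gram map `𝒢(M) = 𝔪ᵗ M 𝔪`. -/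
def gram {n : ℕ} {mv d : ℕ}
    (M : Matrix (Fin (n + 1) → Mon mv d) (Fin (n + 1) → Mon mv d) ℝ) :
    PSpace (fun _ : Fin (n + 1) => mv) :=
  ∑ k : Fin (n + 1) → Mon mv d, ∑ k' : Fin (n + 1) → Mon mv d,
    M k k' • ∏ i : Fin (n + 1), (monAt i (k i) * monAt i (k' i))

/-! ### Homogeneous Gram map, norms -/

/-- Exponent vectors of monomials of degree exactly `d` in `mv + 1` variables. -/
abbrev MonH (mv d : ℕ) : Type :=
  {k : Fin (mv + 1) → Fin (d + 1) // (∑ j : Fin (mv + 1), (k j).val) = d}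

/-- The homogeneous monomial at site `i` with exponent vector `k`. -/
def monHAt {n : ℕ} {mv d : ℕ} (i : Fin (n + 1)) (k : MonH mv d) :
    PSpace (fun _ : Fin (n + 1) => mv + 1) :=
  ∏ j : Fin (mv + 1), X (⟨i, j⟩ : Σ _ : Fin (n + 1), Fin (mv + 1)) ^ (k.1 j).val

/-- The Gram map in the homogeneous setting. -/
def gramH {n : ℕ} {mv d : ℕ}
    (M : Matrix (Fin (n + 1) → MonH mv d) (Fin (n + 1) → MonH mv d) ℝ) :
    PSpace (fun _ : Fin (n + 1) => mv + 1) :=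
  ∑ k : Fin (n + 1) → MonH mv d, ∑ k' : Fin (n + 1) → MonH mv d,
    M k k' • ∏ i : Fin (n + 1), (monHAt i (k i) * monHAt i (k' i))

/-- The largest singular value (ℓ²-operator norm) of a real square matrix. -/
def sigmaMax {ι : Type} [Fintype ι] (M : Matrix ι ι ℝ) : ℝ :=
  sSup {r : ℝ | ∃ y : ι → ℝ, (∑ t, y t ^ 2) ≤ 1 ∧ r = Real.sqrt (∑ t, (M.mulVec y t) ^ 2)}

/-- The supremum norm of `p` on `𝕊 = 𝕊^m × ⋯ × 𝕊^m`. -/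
def InfNormH {n mv : ℕ} (p : PSpace (fun _ : Fin (n + 1) => mv + 1)) : ℝ :=
  sSup {r : ℝ | ∃ a : Fin (n + 1) → Fin (mv + 1) → ℝ,
    (∀ i, ∑ j, a i j ^ 2 = 1) ∧
    r = |MvPolynomial.eval (fun v : Σ _ : Fin (n + 1), Fin (mv + 1) => a v.1 v.2) p|}

/-- `p` is homogeneous of degree `d` in each block of variables separately. -/
def MultiHomog {n : ℕ} (m : Fin (n + 1) → ℕ) (d : ℕ) (p : PSpace m) : Prop :=
  ∀ s ∈ p.support, ∀ i : Fin (n + 1), (∑ j : Fin (m i), s ⟨i, j⟩) = d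

/-- `M` is a separable matrix: a sum of elementary tensors of psd matrices. -/
def SepGram {n : ℕ} {mv d : ℕ}
    (M : Matrix (Fin (n + 1) → MonH mv d) (Fin (n + 1) → MonH mv d) ℝ) : Prop :=
  ∃ (N : ℕ) (Ms : Fin N → ∀ _ : Fin (n + 1), Matrix (MonH mv d) (MonH mv d) ℝ),
    (∀ j i, (Ms j i).PosSemidef) ∧
    ∀ k k', M k k' = ∑ j : Fin N, ∏ i : Fin (n + 1), Ms j i (k i) (k' i)

/-- `μ(p)`: the smallest `λ > 0` such that `p = λ·𝒢(M)` for some `G`-invariant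
subnormalized separable matrix `M`. -/
def muP {n : ℕ} {Ω : Finset (Fin (n + 1)) → ℕ} {G : Type} [Group G] (mv d : ℕ) (A : GAct Ω G)
    (p : PSpace (fun _ : Fin (n + 1) => mv + 1)) : ℝ :=
  sInf {l : ℝ | 0 < l ∧
    ∃ M : Matrix (Fin (n + 1) → MonH mv d) (Fin (n + 1) → MonH mv d) ℝ,
      SepGram M ∧ (∑ k, M k k) ≤ 1 ∧
      (∀ (g : G) (k k' : Fin (n + 1) → MonH mv d),
        M (fun i => k (A.act g i)) (fun i => k' (A.act g i)) = M k k') ∧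
      p = l • gramH M}

/-! ### Factorizability -/

/-- `(Ω,G)` is factorizable. -/
def Factorizable (A : GAct Ω G) : Prop :=
  ∀ N : ℕ, ∃ Cf : ∀ i : Fin (n + 1), (MFi Ω i → Fin N) → ℝ,
    (∀ i β, 0 < Cf i β) ∧
    (∀ (g : G) (i : Fin (n + 1)) (β : MFi Ω i → Fin N),
      Cf (A.act g i) (A.shift g i β) = Cf i β) ∧
    ∀ α : MultiFacet Ω → Fin N,
      (∏ i : Fin (n + 1), Cf i (restr α i)) =
        ((Fintype.card {γ : MultiFacet Ω → Fin N //
          ∃ gs : Fin (n + 1) → G, ∀ i : Fin (n + 1), A.act (gs i) i = i ∧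
            ∀ F : MFi Ω i, γ (A.actF (gs i)⁻¹ F.1) = α F.1} : ℕ) : ℝ)⁻¹

/-! ### Two-block (single edge `Λ₁`) ranks -/

/-- The single-edge rank of a two-block polynomial. -/
def rank1 {mv : ℕ} (p : MvPolynomial (Fin mv ⊕ Fin mv) ℝ) : ℕ∞ :=
  ⨅ r : {r : ℕ // ∃ f g : Fin r → MvPolynomial (Fin mv) ℝ,
    p = ∑ α : Fin r, rename Sum.inl (f α) * rename Sum.inr (g α)}, (r.1 : ℕ∞)

/-- The single-edge separable rank (w.r.t. the local sos cones). -/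
def sep1 {mv : ℕ} (p : MvPolynomial (Fin mv ⊕ Fin mv) ℝ) : ℕ∞ :=
  ⨅ r : {r : ℕ // ∃ f g : Fin r → MvPolynomial (Fin mv) ℝ,
    (∀ α, IsSos (f α) ∧ IsSos (g α)) ∧
    p = ∑ α : Fin r, rename Sum.inl (f α) * rename Sum.inr (g α)}, (r.1 : ℕ∞)

/-- The single-edge sos rank. -/
def sos1 {mv : ℕ} (p : MvPolynomial (Fin mv ⊕ Fin mv) ℝ) : ℕ∞ :=
  ⨅ r : {r : ℕ // ∃ (s₀ s₁ : ℕ) (a : Fin s₀ → Fin r → MvPolynomial (Fin mv) ℝ)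
    (b : Fin s₁ → Fin r → MvPolynomial (Fin mv) ℝ),
    p = ∑ k : Fin s₀, ∑ l : Fin s₁,
      (∑ α : Fin r, rename Sum.inl (a k α) * rename Sum.inr (b l α)) ^ 2}, (r.1 : ℕ∞)

/-- The Euclidean-distance-matrix polynomial `p_m = ∑ (i-j)² xᵢ² yⱼ²`. -/
def pm (mv : ℕ) : MvPolynomial (Fin mv ⊕ Fin mv) ℝ :=
  ∑ i : Fin mv, ∑ j : Fin mv,
    MvPolynomial.C (((i : ℕ) : ℝ) - ((j : ℕ) : ℝ)) ^ 2 *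
      (X (Sum.inl i) ^ 2 * X (Sum.inr j) ^ 2)


/-- Constant block sizes are trivially compatible with any group action. -/
theorem constCompat {n : ℕ} {Ω : Finset (Fin (n + 1)) → ℕ} {G : Type} [Group G]
    (A : GAct Ω G) (mv : ℕ) :
    ∀ (g : G) (i : Fin (n + 1)),
      (fun _ : Fin (n + 1) => mv) (A.act g i) = (fun _ : Fin (n + 1) => mv) i :=
  fun _ _ => rfl
/-! ### Auxiliary lemmas for statement0 -/

lemma exists_facet_mem {n : ℕ} {Ω : Finset (Fin (n + 1)) → ℕ} (hΩ : IsWSC Ω)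
    (i : Fin (n + 1)) : ∃ F, IsFacet Ω F ∧ i ∈ F := by
  classical
  set 𝒮 : Finset (Finset (Fin (n + 1))) :=
    Finset.univ.filter (fun S => i ∈ S ∧ Ω S ≠ 0) with h𝒮
  have h1 : ({i} : Finset (Fin (n + 1))) ∈ 𝒮 := by
    simp [h𝒮, hΩ.2 i]
  obtain ⟨F, hF𝒮, hmax⟩ := Finset.exists_max_image 𝒮 Finset.card ⟨_, h1⟩
  rw [h𝒮, Finset.mem_filter] at hF𝒮
  refine ⟨F, ⟨hF𝒮.2.2, ?_⟩, hF𝒮.2.1⟩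
  intro S hS hFS
  have hS𝒮 : S ∈ 𝒮 := by
    rw [h𝒮, Finset.mem_filter]
    exact ⟨Finset.mem_univ _, hFS hF𝒮.2.1, hS⟩
  exact (Finset.eq_of_subset_of_card_le hFS (hmax S hS𝒮)).symm

lemma mfi_nonempty {n : ℕ} {Ω : Finset (Fin (n + 1)) → ℕ} (hΩ : IsWSC Ω)
    (i : Fin (n + 1)) : Nonempty (MFi Ω i) := by
  obtain ⟨F, hF, hi⟩ := exists_facet_mem hΩ i
  exact ⟨⟨⟨⟨F, hF⟩, ⟨0, Nat.pos_of_ne_zero hF.1⟩⟩, hi⟩⟩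

lemma facet_nonempty {n : ℕ} {Ω : Finset (Fin (n + 1)) → ℕ} (hΩ : IsWSC Ω)
    {F : Finset (Fin (n + 1))} (hF : IsFacet Ω F) : F.Nonempty := by
  rcases F.eq_empty_or_nonempty with h | h
  · exfalso
    have := hF.2 {0} (hΩ.2 0) (by simp [h])
    simp [h] at this
  · exact h

/-- Locally constant functions on the multifacets of a connected WSC are constant. -/
lemma const_of_loc_const {n : ℕ} {Ω : Finset (Fin (n + 1)) → ℕ} (hΩ : IsWSC Ω)
    (hconn : Conn Ω) {I : Type} (α : MultiFacet Ω → I)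
    (h : ∀ i : Fin (n + 1), ∀ F F' : MFi Ω i, α F.1 = α F'.1)
    (F F' : MultiFacet Ω) : α F = α F' := by
  obtain ⟨a, ha⟩ := facet_nonempty hΩ F.1.2
  obtain ⟨b, hb⟩ := facet_nonempty hΩ F'.1.2
  have key : ∀ b : Fin (n + 1),
      Relation.ReflTransGen
        (fun c d => ∃ G : Finset (Fin (n + 1)), IsFacet Ω G ∧ c ∈ G ∧ d ∈ G) a b →
      ∀ (Fa : MFi Ω a) (Fb : MFi Ω b), α Fa.1 = α Fb.1 := by
    intro b hab
    induction hab with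
    | refl => exact fun Fa Fb => h a Fa Fb
    | tail hac step ih =>
      rename_i c b'
      obtain ⟨G, hG, hcG, hbG⟩ := step
      intro Fa Fb
      have hGp : 0 < Ω G := Nat.pos_of_ne_zero hG.1
      set G' : MultiFacet Ω := ⟨⟨G, hG⟩, ⟨0, hGp⟩⟩ with hG'
      calc α Fa.1 = α G' := ih Fa ⟨G', hcG⟩
        _ = α Fb.1 := h b' ⟨G', hbG⟩ Fb
  exact key b (hconn a b) ⟨F, ha⟩ ⟨F', hb⟩

/-- Main construction: a tensor decomposition yields an Ω-decomposition reusing the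
local factors (or zero). -/
lemma odec_of_tdec {n : ℕ} {Ω : Finset (Fin (n + 1)) → ℕ} (hΩ : IsWSC Ω) (hconn : Conn Ω)
    (m : Fin (n + 1) → ℕ) (p : PSpace m) (r : ℕ) (pl : Fin r → ∀ i : Fin (n + 1), LSpace m i)
    (hp : p = ∑ j : Fin r, ∏ i : Fin (n + 1), emb m i (pl j i)) :
    ∃ q : ∀ i : Fin (n + 1), (MFi Ω i → Fin r) → LSpace m i,
      (p = ∑ α : MultiFacet Ω → Fin r, ∏ i : Fin (n + 1), emb m i (q i (restr α i))) ∧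
      ∀ (i : Fin (n + 1)) (β : MFi Ω i → Fin r),
        q i β = 0 ∨ ∃ j : Fin r, q i β = pl j i := by
  classical
  have hMF : Nonempty (MultiFacet Ω) := (mfi_nonempty hΩ 0).elim fun F => ⟨F.1⟩
  have hch : ∀ i : Fin (n + 1), MFi Ω i := fun i => Classical.choice (mfi_nonempty hΩ i)
  -- construct the local polynomials, then forget their definition
  have hex : ∃ q : ∀ i : Fin (n + 1), (MFi Ω i → Fin r) → LSpace m i,
      (∀ (i : Fin (n + 1)) (j : Fin r), q i (fun _ => j) = pl j i) ∧
      (∀ (i : Fin (n + 1)) (β : MFi Ω i → Fin r),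
        (¬ ∀ F F' : MFi Ω i, β F = β F') → q i β = 0) ∧
      ∀ (i : Fin (n + 1)) (β : MFi Ω i → Fin r),
        q i β = 0 ∨ ∃ j : Fin r, q i β = pl j i := by
    refine ⟨fun i β =>
      if (∀ F F' : MFi Ω i, β F = β F') then pl (β (hch i)) i else 0, ?_, ?_, ?_⟩
    · exact fun i j => if_pos fun F F' => rfl
    · exact fun i β hβ => if_neg hβ
    · intro i β
      by_cases hc : ∀ F F' : MFi Ω i, β F = β F'
      · exact Or.inr ⟨β (hch i), if_pos hc⟩
      · exact Or.inl (if_neg hc)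
  obtain ⟨q, hq1, hq0, hq2⟩ := hex
  refine ⟨q, ?_, hq2⟩
  set e : Fin r → (MultiFacet Ω → Fin r) := fun j _ => j with he
  have hinj : ∀ x ∈ Finset.univ, ∀ y ∈ Finset.univ, e x = e y → x = y := by
    intro x _ y _ hxy
    exact congrFun hxy (Classical.choice hMF)
  have himg : ∀ α : MultiFacet Ω → Fin r, α ∉ Finset.image e Finset.univ →
      ∏ i : Fin (n + 1), emb m i (q i (restr α i)) = 0 := by
    intro α hα
    have hnc : ¬ (∀ i : Fin (n + 1), ∀ F F' : MFi Ω i, α F.1 = α F'.1) := by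
      intro hc
      apply hα
      refine Finset.mem_image.2 ⟨α (Classical.choice hMF), Finset.mem_univ _, ?_⟩
      funext F
      exact const_of_loc_const hΩ hconn α hc _ F
    push_neg at hnc
    obtain ⟨i, F, F', hFF⟩ := hnc
    have hz : q i (restr α i) = 0 := hq0 i _ (fun hc => hFF (hc F F'))
    refine Finset.prod_eq_zero (Finset.mem_univ i) ?_
    rw [hz, map_zero]
  have step2 : ∑ j : Fin r, ∏ i : Fin (n + 1), emb m i (pl j i)
      = ∑ j : Fin r, ∏ i : Fin (n + 1), emb m i (q i (restr (e j) i)) := by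
    refine Finset.sum_congr rfl fun j _ => Finset.prod_congr rfl fun i _ => ?_
    rw [show restr (e j) i = fun _ => j from rfl, hq1]
  have step3 : ∑ α ∈ Finset.image e Finset.univ,
      ∏ i : Fin (n + 1), emb m i (q i (restr α i))
      = ∑ j : Fin r, ∏ i : Fin (n + 1), emb m i (q i (restr (e j) i)) :=
    Finset.sum_image hinj
  have step4 : ∑ α ∈ Finset.image e Finset.univ,
      ∏ i : Fin (n + 1), emb m i (q i (restr α i))
      = ∑ α : MultiFacet Ω → Fin r, ∏ i : Fin (n + 1), emb m i (q i (restr α i)) :=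
    Finset.sum_subset (Finset.subset_univ _) (fun α _ hα => himg α hα)
  rw [hp, step2, ← step3, step4]

/-- Every polynomial has a plain tensor decomposition. -/
lemma tdec_exists {n : ℕ} (m : Fin (n + 1) → ℕ) (p : PSpace m) :
    ∃ (r : ℕ) (pl : Fin r → ∀ i : Fin (n + 1), LSpace m i),
      p = ∑ j : Fin r, ∏ i : Fin (n + 1), emb m i (pl j i) := by
  classical
  set Q : ((Σ i : Fin (n + 1), Fin (m i)) →₀ ℕ) → ∀ i : Fin (n + 1), LSpace m i :=
    fun s i => (if i = 0 then C (coeff s p) else 1) * ∏ j : Fin (m i), X j ^ s ⟨i, j⟩ with hQ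
  have hmono : ∀ s : (Σ i : Fin (n + 1), Fin (m i)) →₀ ℕ,
      ∏ i : Fin (n + 1), emb m i (Q s i) = monomial s (coeff s p) := by
    intro s
    have hemb : ∀ i : Fin (n + 1), emb m i (Q s i) =
        (if i = 0 then C (coeff s p) else 1) *
          ∏ j : Fin (m i), X (⟨i, j⟩ : Σ i : Fin (n + 1), Fin (m i)) ^ s ⟨i, j⟩ := by
      intro i
      rw [hQ]
      simp only [map_mul, map_prod, map_pow, apply_ite (emb m i), map_one]
      rw [show (emb m i) (C (coeff s p)) = C (coeff s p) from AlgHom.commutes _ _]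
      congr 1
      refine Finset.prod_congr rfl fun j _ => ?_
      congr 1
      exact rename_X _ j
    calc ∏ i : Fin (n + 1), emb m i (Q s i)
        = ∏ i : Fin (n + 1), ((if i = 0 then C (coeff s p) else 1) *
            ∏ j : Fin (m i), X (⟨i, j⟩ : Σ i : Fin (n + 1), Fin (m i)) ^ s ⟨i, j⟩) :=
          Finset.prod_congr rfl fun i _ => hemb i
      _ = (∏ i : Fin (n + 1), (if i = 0 then C (coeff s p) else 1)) *
            ∏ i : Fin (n + 1), ∏ j : Fin (m i),
              X (⟨i, j⟩ : Σ i : Fin (n + 1), Fin (m i)) ^ s ⟨i, j⟩ := Finset.prod_mul_distrib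
      _ = C (coeff s p) * ∏ v : Σ i : Fin (n + 1), Fin (m i), X v ^ s v := by
          congr 1
          · simp
          · rw [← Finset.univ_sigma_univ, Finset.prod_sigma]
      _ = monomial s (coeff s p) := by
          rw [monomial_eq, Finsupp.prod_pow]
  refine ⟨p.support.card, fun j => Q ((p.support.equivFin.symm j) : _), ?_⟩
  calc p = ∑ s ∈ p.support, monomial s (coeff s p) := (support_sum_monomial_coeff p).symm
    _ = ∑ s : p.support, monomial s.1 (coeff s.1 p) := (Finset.sum_coe_sort _ _).symm
    _ = ∑ j : Fin p.support.card,
          monomial (p.support.equivFin.symm j : _) (coeff (p.support.equivFin.symm j : _) p) :=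
        (Equiv.sum_comp p.support.equivFin.symm _).symm
    _ = ∑ j : Fin p.support.card, ∏ i : Fin (n + 1),
          emb m i (Q ((p.support.equivFin.symm j) : _) i) := by
        exact Finset.sum_congr rfl fun j _ => (hmono _).symm

/-- existence of `Ω`-decompositions, reusing the given local polynomials. -/
theorem statement0 {n : ℕ} (Ω : Finset (Fin (n + 1)) → ℕ) (hΩ : IsWSC Ω) (hconn : Conn Ω)
    (m : Fin (n + 1) → ℕ) (p : PSpace m) :
    ORank Ω m p < ⊤ ∧
    ∀ (r : ℕ) (pl : Fin r → ∀ i : Fin (n + 1), LSpace m i),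
      p = ∑ j : Fin r, ∏ i : Fin (n + 1), emb m i (pl j i) →
      ∃ (r' : ℕ) (q : ∀ i : Fin (n + 1), (MFi Ω i → Fin r') → LSpace m i),
        (p = ∑ α : MultiFacet Ω → Fin r', ∏ i : Fin (n + 1), emb m i (q i (restr α i))) ∧
        ∀ (i : Fin (n + 1)) (β : MFi Ω i → Fin r'),
          q i β = 0 ∨ ∃ j : Fin r, q i β = pl j i := by
  constructor
  · obtain ⟨r, pl, hp⟩ := tdec_exists m p
    obtain ⟨q, hdec, -⟩ := odec_of_tdec hΩ hconn m p r pl hp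
    have h : HasODec Ω m p r := ⟨q, hdec⟩
    exact lt_of_le_of_lt (iInf_le _ (⟨r, h⟩ : {r : ℕ // HasODec Ω m p r}))
      (WithTop.coe_lt_top r)
  · intro r pl hp
    obtain ⟨q, hdec, hmem⟩ := odec_of_tdec hΩ hconn m p r pl hp
    exact ⟨r, q, hdec, hmem⟩


end
end PolyDec
end

section
/- Let T : {1,…,d}^{n+1} → ℝ be a symmetric real tensor, i.e. T(i ∘ σ) = T(i) for every index tuple i ∈ {1,…,d}^{n+1} and every permutation σ of the n+1 positions. Then there exist r₁, r₂ ∈ ℕ and vectors v₁,…,v_{r₁+r₂} ∈ ℝ^d such that T_{i₀,…,iₙ} = Σ_{ℓ=1}^{r₁} v_ℓ(i₀)⋯v_ℓ(iₙ) − Σ_{ℓ=r₁+1}^{r₁+r₂} v_ℓ(i₀)⋯v_ℓ(iₙ) for all i₀,…,iₙ ∈ {1,…,d}, i.e. T = Σ_{ℓ=1}^{r₁} v_ℓ^{⊗(n+1)} − Σ_{ℓ=r₁+1}^{r₁+r₂} v_ℓ^{⊗(n+1)}. If n is even, one may take r₂ = 0, i.e. T = Σ_{ℓ=1}^{r₁}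 v_ℓ^{⊗(n+1)}. -/
namespace PolyDec

open MvPolynomial

attribute [local instance] Classical.propDecidable

noncomputable section

variable {n : ℕ} {Ω : Finset (Fin (n + 1)) → ℕ} {G : Type} [Group G]

variable {m : Fin (n + 1) → ℕ}

noncomputable def sgn (b : Bool) : ℝ := if b then 1 else -1

-- regroup product over positions by fibers
lemma prod_sgn_comp {n : ℕ} (f : Fin (n+1) → Fin (n+1)) (ε : Fin (n+1) → Bool) :
    ∏ i : Fin (n+1), sgn (ε (f i)) =
      ∏ t : Fin (n+1), sgn (ε t) ^ (Finset.univ.filter fun i => f i = t).card := by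
  have : ∀ i : Fin (n+1), sgn (ε (f i)) = ∏ t : Fin (n+1), if f i = t then sgn (ε t) else 1 := by
    intro i
    rw [Finset.prod_ite_eq]
    simp
  simp_rw [this]
  rw [Finset.prod_comm]
  congr 1
  ext t
  rw [Finset.prod_ite, Finset.prod_const, Finset.prod_const_one, mul_one]

lemma sum_eps {n : ℕ} (m : Fin (n+1) → ℕ) :
    ∑ ε : Fin (n+1) → Bool, ∏ t, sgn (ε t) ^ (m t + 1)
      = if ∀ t, Odd (m t) then (2:ℝ)^(n+1) else 0 := by
  have h1 : ∑ ε : Fin (n+1) → Bool, ∏ t, sgn (ε t) ^ (m t + 1)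
      = ∏ t : Fin (n+1), ∑ b : Bool, sgn b ^ (m t + 1) := by
    rw [Finset.prod_univ_sum, Fintype.piFinset_univ]
  rw [h1]
  have h2 : ∀ t : Fin (n+1), (∑ b : Bool, sgn b ^ (m t + 1))
      = if Odd (m t) then (2:ℝ) else 0 := by
    intro t
    have hb : (∑ b : Bool, sgn b ^ (m t + 1)) = (-1:ℝ) ^ (m t + 1) + 1 ^ (m t + 1) := by
      simp [sgn]
      ring
    rw [hb, one_pow]
    rcases Nat.even_or_odd (m t) with h | h
    · rw [(Even.add_one h).neg_one_pow]
      simp [Nat.not_odd_iff_even.2 h]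
    · rw [(Odd.add_one h).neg_one_pow]
      norm_num [h]
  simp_rw [h2]
  by_cases hall : ∀ t, Odd (m t)
  · simp [hall, Finset.prod_const]
  · rw [if_neg hall]
    push_neg at hall
    obtain ⟨t, ht⟩ := hall
    exact Finset.prod_eq_zero (Finset.mem_univ t) (by simp [ht])

lemma odd_fibers_iff {n : ℕ} (f : Fin (n+1) → Fin (n+1)) :
    (∀ t, Odd (Finset.univ.filter fun i => f i = t).card) ↔ Function.Bijective f := by
  constructor
  · intro h
    rw [← Finite.surjective_iff_bijective]
    intro t
    have := h t
    have hne : (Finset.univ.filter fun i => f i = t).Nonempty :=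
      Finset.card_ne_zero.1 this.pos.ne'
    obtain ⟨i, hi⟩ := hne
    exact ⟨i, (Finset.mem_filter.1 hi).2⟩
  · intro hf t
    have : (Finset.univ.filter fun i => f i = t) = {(Equiv.ofBijective f hf).symm t} := by
      ext i
      simp only [Finset.mem_filter, Finset.mem_univ, true_and, Finset.mem_singleton]
      rw [Equiv.eq_symm_apply, Equiv.ofBijective_apply]
    rw [this, Finset.card_singleton]
    exact odd_one

lemma key_expand {n d : ℕ} (T : (Fin (n + 1) → Fin d) → ℝ)
    (hsym : ∀ (idx : Fin (n + 1) → Fin d) (σ : Equiv.Perm (Fin (n + 1))), T (idx ∘ σ) = T idx)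
    (idx : Fin (n + 1) → Fin d) :
    ∑ jf : Fin (n + 1) → Fin d, ∑ ε : Fin (n + 1) → Bool,
      (T jf * ∏ t, sgn (ε t)) *
        ∏ i, (∑ t, sgn (ε t) * (if jf t = idx i then (1:ℝ) else 0)) =
    ((Finset.univ.filter (fun f : Fin (n + 1) → Fin (n + 1) => Function.Bijective f)).card : ℝ)
      * 2 ^ (n + 1) * T idx := by
  have step1 : ∀ (jf : Fin (n+1) → Fin d) (ε : Fin (n+1) → Bool),
      (T jf * ∏ t, sgn (ε t)) *
        ∏ i, (∑ t, sgn (ε t) * (if jf t = idx i then (1:ℝ) else 0)) =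
      ∑ f : Fin (n+1) → Fin (n+1),
        T jf * (∏ t, sgn (ε t) ^ ((Finset.univ.filter fun i => f i = t).card + 1)) *
          ∏ i, (if jf (f i) = idx i then (1:ℝ) else 0) := by
    intro jf ε
    rw [Finset.prod_univ_sum, Fintype.piFinset_univ, Finset.mul_sum]
    refine Finset.sum_congr rfl fun f _ => ?_
    rw [Finset.prod_mul_distrib, prod_sgn_comp f ε]
    simp_rw [pow_succ']
    rw [Finset.prod_mul_distrib]
    ring
  simp_rw [step1]
  have step2 : ∀ jf : Fin (n+1) → Fin d,
      ∑ ε : Fin (n+1) → Bool, ∑ f : Fin (n+1) → Fin (n+1),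
        T jf * (∏ t, sgn (ε t) ^ ((Finset.univ.filter fun i => f i = t).card + 1)) *
          ∏ i, (if jf (f i) = idx i then (1:ℝ) else 0) =
      ∑ f ∈ Finset.univ.filter (fun f : Fin (n+1) → Fin (n+1) => Function.Bijective f),
        (2:ℝ)^(n+1) * (T jf * ∏ i, (if jf (f i) = idx i then (1:ℝ) else 0)) := by
    intro jf
    rw [Finset.sum_comm]
    rw [Finset.sum_filter]
    refine Finset.sum_congr rfl fun f _ => ?_
    have : ∑ ε : Fin (n+1) → Bool,
        T jf * (∏ t, sgn (ε t) ^ ((Finset.univ.filter fun i => f i = t).card + 1)) *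
          ∏ i, (if jf (f i) = idx i then (1:ℝ) else 0) =
        (∑ ε : Fin (n+1) → Bool, ∏ t, sgn (ε t) ^ ((Finset.univ.filter fun i => f i = t).card + 1)) *
          (T jf * ∏ i, (if jf (f i) = idx i then (1:ℝ) else 0)) := by
      rw [Finset.sum_mul]
      refine Finset.sum_congr rfl fun ε _ => by ring
    rw [this, sum_eps]
    simp only [odd_fibers_iff]
    split <;> simp
  simp_rw [step2]
  rw [Finset.sum_comm]
  have step3 : ∀ f ∈ Finset.univ.filter (fun f : Fin (n+1) → Fin (n+1) => Function.Bijective f),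
      ∑ jf : Fin (n+1) → Fin d,
        (2:ℝ)^(n+1) * (T jf * ∏ i, (if jf (f i) = idx i then (1:ℝ) else 0)) =
      (2:ℝ)^(n+1) * T idx := by
    intro f hf
    have hbij : Function.Bijective f := (Finset.mem_filter.1 hf).2
    set e := Equiv.ofBijective f hbij with he
    have hD : ∀ jf : Fin (n+1) → Fin d,
        (∏ i, (if jf (f i) = idx i then (1:ℝ) else 0)) =
        if jf = idx ∘ e.symm then (1:ℝ) else 0 := by
      intro jf
      rw [Finset.prod_boole]
      congr 1
      simp only [Finset.mem_univ, true_implies, eq_iff_iff]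
      constructor
      · intro h
        funext t
        have h2 := h (e.symm t)
        have h3 : f (e.symm t) = t := by
          rw [← Equiv.ofBijective_apply f hbij]; exact e.apply_symm_apply t
        rw [h3] at h2
        exact h2
      · intro h i
        subst h
        have h3 : e.symm (f i) = i := by
          rw [← Equiv.ofBijective_apply f hbij]; exact e.symm_apply_apply i
        simp [Function.comp, h3]
    simp_rw [hD]
    rw [← Finset.mul_sum]
    congr 1
    rw [Finset.sum_congr rfl (fun jf _ => by rw [mul_ite, mul_one, mul_zero]),
      Finset.sum_ite_eq' Finset.univ (idx ∘ e.symm) T]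
    simpa using hsym idx e.symm
  rw [Finset.sum_congr rfl step3, Finset.sum_const, nsmul_eq_mul]
  ring

lemma scale_prod {n d : ℕ} (s : ℝ) (a : Fin d → ℝ) (idx : Fin (n+1) → Fin d) :
    ∏ i : Fin (n+1), (s * a (idx i)) = s ^ (n+1) * ∏ i : Fin (n+1), a (idx i) := by
  rw [Finset.prod_mul_distrib, Finset.prod_const, Finset.card_univ, Fintype.card_fin]

lemma combo {n d : ℕ} {ι : Type} [Fintype ι] (c : ι → ℝ) (w : ι → Fin d → ℝ)
    (T : (Fin (n + 1) → Fin d) → ℝ)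
    (h : ∀ idx : Fin (n+1) → Fin d, T idx = ∑ m : ι, c m * ∏ i : Fin (n+1), w m (idx i)) :
    (∃ (r₁ r₂ : ℕ) (v : ℕ → Fin d → ℝ), ∀ idx : Fin (n + 1) → Fin d,
      T idx = (∑ l ∈ Finset.range r₁, ∏ i : Fin (n + 1), v l (idx i)) -
        ∑ l ∈ Finset.Ico r₁ (r₁ + r₂), ∏ i : Fin (n + 1), v l (idx i)) ∧
    (Even n → ∃ (r₁ : ℕ) (v : ℕ → Fin d → ℝ), ∀ idx : Fin (n + 1) → Fin d,
      T idx = ∑ l ∈ Finset.range r₁, ∏ i : Fin (n + 1), v l (idx i)) := by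
  set N := Fintype.card ι with hN
  set e : Fin N ≃ ι := (Fintype.equivFin ι).symm with he
  have hnz : (n + 1 : ℕ) ≠ 0 := Nat.succ_ne_zero n
  constructor
  · -- general case
    refine ⟨N, N, fun l => if hl : l < N then
        (fun j => (max (c (e ⟨l, hl⟩)) 0) ^ (((n+1:ℕ):ℝ))⁻¹ * w (e ⟨l, hl⟩) j)
      else if hl2 : l - N < N then
        (fun j => (max (-(c (e ⟨l - N, hl2⟩))) 0) ^ (((n+1:ℕ):ℝ))⁻¹ * w (e ⟨l - N, hl2⟩) j)
      else 0, fun idx => ?_⟩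
    have hpos : ∑ l ∈ Finset.range N, ∏ i : Fin (n + 1),
        (if hl : l < N then
          (fun j => (max (c (e ⟨l, hl⟩)) 0) ^ (((n+1:ℕ):ℝ))⁻¹ * w (e ⟨l, hl⟩) j)
        else if hl2 : l - N < N then
          (fun j => (max (-(c (e ⟨l - N, hl2⟩))) 0) ^ (((n+1:ℕ):ℝ))⁻¹ * w (e ⟨l - N, hl2⟩) j)
        else 0) (idx i)
        = ∑ m : Fin N, max (c (e m)) 0 * ∏ i : Fin (n+1), w (e m) (idx i) := by
      rw [Finset.sum_range]
      refine Finset.sum_congr rfl fun m _ => ?_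
      simp only [m.isLt, dif_pos]
      rw [scale_prod, Real.rpow_inv_natCast_pow (le_max_right _ _) hnz]
    have hneg : ∑ l ∈ Finset.Ico N (N + N), ∏ i : Fin (n + 1),
        (if hl : l < N then
          (fun j => (max (c (e ⟨l, hl⟩)) 0) ^ (((n+1:ℕ):ℝ))⁻¹ * w (e ⟨l, hl⟩) j)
        else if hl2 : l - N < N then
          (fun j => (max (-(c (e ⟨l - N, hl2⟩))) 0) ^ (((n+1:ℕ):ℝ))⁻¹ * w (e ⟨l - N, hl2⟩) j)
        else 0) (idx i)
        = ∑ m : Fin N, max (-(c (e m))) 0 * ∏ i : Fin (n+1), w (e m) (idx i) := by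
      rw [Finset.sum_Ico_eq_sum_range]
      simp only [Nat.add_sub_cancel_left]
      rw [Finset.sum_range]
      refine Finset.sum_congr rfl fun m _ => ?_
      have h1 : ¬ (N + (m : ℕ) < N) := by omega
      have h2 : N + (m : ℕ) - N < N := by omega
      simp only [h1, dif_neg, not_false_iff, Nat.add_sub_cancel_left, m.isLt, dif_pos, Fin.eta]
      rw [scale_prod, Real.rpow_inv_natCast_pow (le_max_right _ _) hnz]
    rw [hpos, hneg, ← Finset.sum_sub_distrib, h idx, ← Equiv.sum_comp e
      (fun m => c m * ∏ i : Fin (n+1), w m (idx i))]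
    refine Finset.sum_congr rfl fun m _ => ?_
    rw [← sub_mul, max_zero_sub_max_neg_zero_eq_self]
  · -- even case
    intro hev
    have hodd : Odd (n + 1) := Even.add_one hev
    refine ⟨N, fun l => if hl : l < N then
        (fun j => (if 0 ≤ c (e ⟨l, hl⟩) then (c (e ⟨l, hl⟩)) ^ (((n+1:ℕ):ℝ))⁻¹
          else -((-(c (e ⟨l, hl⟩))) ^ (((n+1:ℕ):ℝ))⁻¹)) * w (e ⟨l, hl⟩) j)
      else 0, fun idx => ?_⟩
    rw [h idx, ← Equiv.sum_comp e (fun m => c m * ∏ i : Fin (n+1), w m (idx i)),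
      Finset.sum_range]
    refine Finset.sum_congr rfl fun m _ => ?_
    simp only [m.isLt, dif_pos]
    rw [scale_prod]
    congr 1
    by_cases hc : 0 ≤ c (e m)
    · rw [if_pos hc, Real.rpow_inv_natCast_pow hc hnz]
    · rw [if_neg hc, hodd.neg_pow,
        Real.rpow_inv_natCast_pow (by linarith [lt_of_not_ge hc]) hnz, neg_neg]


/-- symmetric real tensors decompose as differences of sums of symmetric
elementary tensors; no minus sign needed when `n` is even. -/
theorem statement3 (n d : ℕ) (T : (Fin (n + 1) → Fin d) → ℝ)
    (hsym : ∀ (idx : Fin (n + 1) → Fin d) (σ : Equiv.Perm (Fin (n + 1))),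
      T (idx ∘ σ) = T idx) :
    (∃ (r₁ r₂ : ℕ) (v : ℕ → Fin d → ℝ), ∀ idx : Fin (n + 1) → Fin d,
      T idx = (∑ l ∈ Finset.range r₁, ∏ i : Fin (n + 1), v l (idx i)) -
        ∑ l ∈ Finset.Ico r₁ (r₁ + r₂), ∏ i : Fin (n + 1), v l (idx i)) ∧
    (Even n → ∃ (r₁ : ℕ) (v : ℕ → Fin d → ℝ), ∀ idx : Fin (n + 1) → Fin d,
      T idx = ∑ l ∈ Finset.range r₁, ∏ i : Fin (n + 1), v l (idx i)) := by
  classical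
  set K : ℝ := ((Finset.univ.filter
    (fun f : Fin (n + 1) → Fin (n + 1) => Function.Bijective f)).card : ℝ) with hK
  have hKpos : 0 < K := by
    rw [hK]
    exact_mod_cast Finset.card_pos.2
      ⟨id, Finset.mem_filter.2 ⟨Finset.mem_univ _, Function.bijective_id⟩⟩
  have hC : K * 2 ^ (n + 1) ≠ 0 := by positivity
  apply combo (ι := (Fin (n + 1) → Fin d) × (Fin (n + 1) → Bool))
    (fun p => T p.1 * (∏ t, sgn (p.2 t)) / (K * 2 ^ (n + 1)))
    (fun p j => ∑ t, sgn (p.2 t) * (if p.1 t = j then (1:ℝ) else 0))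
  intro idx
  rw [Fintype.sum_prod_type]
  simp_rw [div_mul_eq_mul_div, ← Finset.sum_div]
  rw [key_expand T hsym idx, ← hK]
  field_simp

end
end PolyDec
end
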